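/- arXiv:2409.19567 — 4 statements merged into one kernel-verified Lean document; each statement's English description precedes it below -/
import Mathlib

section
/- Let h : ℝ^d → ℝ be L-smooth. For any x, x̃, y ∈ ℝ^d and real numbers u, ũ with 0 < u ≤ ũ, define for each l ∈ {1,…,d} the vector g(l) = G_h^{(c)}(x,u,l) − G_h^{(c)}(x̃,ũ,l) + G_h^{(2d)}(x̃,ũ). Then (1/d)·Σ_{l=1}^d ‖g(l) − ∇h(x)‖² ≤ 12·d·L²·‖x − y‖² + 12·d·L²·‖x̃ − y‖² + (7/2)·ũ²·L²·d². -/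
/-!
Drawing `l` uniformly, the estimator `g(l)` has mean `A = G2d(x, u)`, so its mean squared error
splits as variance plus squared bias: `(1/d) Σ ‖g(l) - ∇h(x)‖² = (d - 1) ‖A - B‖² + ‖A - ∇h(x)‖²`
with `B = G2d(x̃, ũ)`. For an `L`-smooth `h` the second-order Taylor error is at most `L/2 ‖v‖²`,
so every central difference is within `L u / 2` of the partial derivative and
`‖G2d(x, u) - ∇h(x)‖² ≤ d L² u² / 4`. Passing from `A` to `B` through `∇h(x)` and `∇h(x̃)` costs
in addition `‖∇h(x) - ∇h(x̃)‖ ≤ L ‖x - x̃‖ ≤ L (‖x - y‖ + ‖x̃ - y‖)`.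
-/

noncomputable section

open Finset

/-- The coordinate-wise zeroth-order gradient estimator
`G_h^{(c)}(x,u,l) = d ((h(x+u e_l) − h(x−u e_l))/(2u)) e_l`. -/
def Gc (d : ℕ) (h : EuclideanSpace ℝ (Fin d) → ℝ) (x : EuclideanSpace ℝ (Fin d)) (u : ℝ)
    (l : Fin d) : EuclideanSpace ℝ (Fin d) :=
  ((d : ℝ) * ((h (x + u • EuclideanSpace.single l (1 : ℝ))
      - h (x - u • EuclideanSpace.single l (1 : ℝ))) / (2 * u))) • EuclideanSpace.single l (1 : ℝ)

/-- The `2d`-point zeroth-order gradient estimator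
`G_h^{(2d)}(x,u) = Σ_{l=1}^d ((h(x+u e_l) − h(x−u e_l))/(2u)) e_l`. -/
def G2d (d : ℕ) (h : EuclideanSpace ℝ (Fin d) → ℝ) (x : EuclideanSpace ℝ (Fin d)) (u : ℝ) :
    EuclideanSpace ℝ (Fin d) :=
  ∑ l : Fin d, ((h (x + u • EuclideanSpace.single l (1 : ℝ))
      - h (x - u • EuclideanSpace.single l (1 : ℝ))) / (2 * u)) • EuclideanSpace.single l (1 : ℝ)

open scoped InnerProductSpace

section Smooth

variable {E : Type*} [NormedAddCommGroup E] [InnerProductSpace ℝ E] [CompleteSpace E]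
  {f : E → ℝ} {L : ℝ}

theorem abs_sub_sub_inner_gradient_le (hf : Differentiable ℝ f)
    (hL : ∀ x y, ‖gradient f x - gradient f y‖ ≤ L * ‖x - y‖) (x v : E) :
    |f (x + v) - f x - ⟪gradient f x, v⟫_ℝ| ≤ L / 2 * ‖v‖ ^ 2 := by
  have hφ : ∀ t : ℝ, HasDerivAt (fun t : ℝ => f (x + t • v) - f x - t * ⟪gradient f x, v⟫_ℝ)
      ⟪gradient f (x + t • v) - gradient f x, v⟫_ℝ t := by
    intro t
    have hline : HasDerivAt (fun t : ℝ => x + t • v) v t := by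
      simpa using ((hasDerivAt_id t).smul_const v).const_add x
    have hcomp : HasDerivAt (fun t : ℝ => f (x + t • v)) ⟪gradient f (x + t • v), v⟫_ℝ t :=
      (hf _).hasGradientAt.hasFDerivAt.comp_hasDerivAt t hline
    exact ((hcomp.sub_const (f x)).sub ((hasDerivAt_id' t).mul_const _)).congr_deriv
      (by rw [inner_sub_left, one_mul])
  have hB : ∀ t, HasDerivAt (fun t : ℝ => L / 2 * ‖v‖ ^ 2 * t ^ 2) (L * ‖v‖ ^ 2 * t) t :=
    fun t => ((hasDerivAt_pow 2 t).const_mul (L / 2 * ‖v‖ ^ 2)).congr_deriv (by push_cast; ring)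
  have key := image_norm_le_of_norm_deriv_right_le_deriv_boundary (a := 0) (b := 1)
    (fun t _ => (hφ t).continuousAt.continuousWithinAt) (fun t _ => (hφ t).hasDerivWithinAt)
    (by simp) hB (fun t ht => ?_) (Set.right_mem_Icc.2 zero_le_one)
  · simpa using key
  calc ‖⟪gradient f (x + t • v) - gradient f x, v⟫_ℝ‖
      ≤ ‖gradient f (x + t • v) - gradient f x‖ * ‖v‖ := norm_inner_le_norm _ _
    _ ≤ L * ‖x + t • v - x‖ * ‖v‖ := by gcongr; exact hL _ _
    _ = L * ‖v‖ ^ 2 * t := by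
      rw [add_sub_cancel_left, norm_smul, Real.norm_of_nonneg ht.1]; ring

theorem abs_centralDiff_sub_inner_gradient_le (hf : Differentiable ℝ f)
    (hL : ∀ x y, ‖gradient f x - gradient f y‖ ≤ L * ‖x - y‖) (x v : E) {u : ℝ} (hu : 0 < u) :
    |(f (x + u • v) - f (x - u • v)) / (2 * u) - ⟪gradient f x, v⟫_ℝ| ≤ L * u / 2 * ‖v‖ ^ 2 := by
  have hplus := abs_sub_sub_inner_gradient_le hf hL x (u • v)
  have hminus := abs_sub_sub_inner_gradient_le hf hL x (-(u • v))
  rw [← sub_eq_add_neg, inner_neg_right, norm_neg] at hminus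
  rw [inner_smul_right, norm_smul, Real.norm_of_nonneg hu.le] at hplus hminus
  set g := ⟪gradient f x, v⟫_ℝ
  have h2u : 0 < 2 * u := by positivity
  rw [show (f (x + u • v) - f (x - u • v)) / (2 * u) - g
      = ((f (x + u • v) - f x - u * g) - (f (x - u • v) - f x - -(u * g))) / (2 * u) by
        field_simp; ring,
    abs_div, abs_of_pos h2u, div_le_iff₀ h2u]
  calc _ ≤ |f (x + u • v) - f x - u * g| + |f (x - u • v) - f x - -(u * g)| := abs_sub _ _
    _ ≤ L / 2 * (u * ‖v‖) ^ 2 + L / 2 * (u * ‖v‖) ^ 2 := add_le_add hplus hminus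
    _ = L * u / 2 * ‖v‖ ^ 2 * (2 * u) := by ring

end Smooth

section Norm

variable {F : Type*} [SeminormedAddCommGroup F]

theorem norm_sub_sq_le_two_mul (a b c : F) : ‖a - b‖ ^ 2 ≤ 2 * (‖a - c‖ ^ 2 + ‖b - c‖ ^ 2) := by
  have := norm_sub_le_norm_sub_add_norm_sub a c b
  rw [norm_sub_rev c b] at this
  nlinarith [norm_nonneg (a - b), sq_nonneg (‖a - c‖ - ‖b - c‖)]

theorem norm_add_add_sq_le_three_mul (a b c : F) :
    ‖a + b + c‖ ^ 2 ≤ 3 * (‖a‖ ^ 2 + ‖b‖ ^ 2 + ‖c‖ ^ 2) := by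
  have := norm_add₃_le (a := a) (b := b) (c := c)
  nlinarith [norm_nonneg (a + b + c), sq_nonneg (‖a‖ - ‖b‖), sq_nonneg (‖b‖ - ‖c‖),
    sq_nonneg (‖a‖ - ‖c‖)]

end Norm

theorem sum_norm_add_sq_of_sum_eq_zero {F ι : Type*} [NormedAddCommGroup F]
    [InnerProductSpace ℝ F] (s : Finset ι) {w : ι → F} (hw : ∑ i ∈ s, w i = 0) (z : F) :
    ∑ i ∈ s, ‖w i + z‖ ^ 2 = ∑ i ∈ s, ‖w i‖ ^ 2 + #s * ‖z‖ ^ 2 := by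
  simp only [norm_add_sq_real, sum_add_distrib, ← mul_sum, ← sum_inner, hw, inner_zero_left,
    mul_zero, add_zero, sum_const, nsmul_eq_mul]

section Coordinates

variable {ι : Type*} [Fintype ι]

theorem norm_sq_le_card_mul_of_abs_apply_le {v : EuclideanSpace ℝ ι} {r : ℝ}
    (h : ∀ i, |v i| ≤ r) : ‖v‖ ^ 2 ≤ Fintype.card ι * r ^ 2 := by
  rw [EuclideanSpace.real_norm_sq_eq]
  calc ∑ i, v i ^ 2 ≤ ∑ _i : ι, r ^ 2 :=
      sum_le_sum fun i _ => sq_le_sq' (neg_le_of_abs_le (h i)) (le_of_abs_le (h i))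
    _ = Fintype.card ι * r ^ 2 := by simp

variable [DecidableEq ι]

theorem sum_smul_single_apply (c : ι → ℝ) (j : ι) :
    (∑ i, c i • EuclideanSpace.single i (1 : ℝ)) j = c j := by
  simp [Pi.single_apply]

theorem sum_apply_smul_single (c : EuclideanSpace ℝ ι) :
    ∑ i, c i • EuclideanSpace.single i (1 : ℝ) = c := by
  ext j
  exact sum_smul_single_apply _ j

theorem sum_norm_card_smul_single_sub_add_sq (c z : EuclideanSpace ℝ ι) :
    ∑ i, ‖((Fintype.card ι : ℝ) * c i) • EuclideanSpace.single i (1 : ℝ) - c + z‖ ^ 2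
      = Fintype.card ι * ((Fintype.card ι - 1) * ‖c‖ ^ 2 + ‖z‖ ^ 2) := by
  set n : ℝ := (Fintype.card ι : ℝ)
  have hmean : ∑ i, ((n * c i) • EuclideanSpace.single i (1 : ℝ) - c) = 0 := by
    simp only [sum_sub_distrib, mul_smul, ← smul_sum, sum_apply_smul_single, sum_const, card_univ,
      n, Nat.cast_smul_eq_nsmul, sub_self]
  have hsq : ∑ i, ‖(n * c i) • EuclideanSpace.single i (1 : ℝ)‖ ^ 2 = n ^ 2 * ‖c‖ ^ 2 := by
    simp [norm_smul, mul_pow, ← mul_sum, EuclideanSpace.real_norm_sq_eq]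
  -- with `z = c` the identity reads `n² ‖c‖² = ∑ ‖w i‖² + n ‖c‖²`
  have hspread := sum_norm_add_sq_of_sum_eq_zero univ hmean c
  simp only [sub_add_cancel, hsq, card_univ] at hspread
  rw [sum_norm_add_sq_of_sum_eq_zero univ hmean z, card_univ]
  linear_combination (-1 : ℝ) * hspread

end Coordinates

section Estimators

variable {d : ℕ} {h : EuclideanSpace ℝ (Fin d) → ℝ}

theorem G2d_apply (x : EuclideanSpace ℝ (Fin d)) (u : ℝ) (k : Fin d) :
    G2d d h x u k = (h (x + u • EuclideanSpace.single k (1 : ℝ))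
      - h (x - u • EuclideanSpace.single k (1 : ℝ))) / (2 * u) :=
  sum_smul_single_apply _ k

theorem Gc_eq_smul_single (x : EuclideanSpace ℝ (Fin d)) (u : ℝ) (l : Fin d) :
    Gc d h x u l = ((d : ℝ) * G2d d h x u l) • EuclideanSpace.single l (1 : ℝ) := by
  rw [G2d_apply, Gc]

theorem norm_G2d_sub_gradient_sq_le {L : ℝ} (hdiff : Differentiable ℝ h)
    (hsmooth : ∀ x y, ‖gradient h x - gradient h y‖ ≤ L * ‖x - y‖)
    (x : EuclideanSpace ℝ (Fin d)) {u : ℝ} (hu : 0 < u) :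
    ‖G2d d h x u - gradient h x‖ ^ 2 ≤ d * L ^ 2 * u ^ 2 / 4 := by
  have hcoord : ∀ k, |(G2d d h x u - gradient h x) k| ≤ L * u / 2 := fun k => by
    have := abs_centralDiff_sub_inner_gradient_le hdiff hsmooth x (EuclideanSpace.single k 1) hu
    rw [EuclideanSpace.inner_single_right] at this
    simpa [G2d_apply] using this
  calc _ ≤ Fintype.card (Fin d) * (L * u / 2) ^ 2 := norm_sq_le_card_mul_of_abs_apply_le hcoord
    _ = d * L ^ 2 * u ^ 2 / 4 := by rw [Fintype.card_fin]; ring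

theorem sum_norm_Gc_sub_Gc_add_G2d_sub_sq (h' : EuclideanSpace ℝ (Fin d) → ℝ)
    (x x' γ : EuclideanSpace ℝ (Fin d)) (u u' : ℝ) :
    ∑ l, ‖Gc d h x u l - Gc d h' x' u' l + G2d d h' x' u' - γ‖ ^ 2
      = d * ((d - 1) * ‖G2d d h x u - G2d d h' x' u'‖ ^ 2 + ‖G2d d h x u - γ‖ ^ 2) := by
  set A := G2d d h x u
  set B := G2d d h' x' u'
  have hsplit : ∀ l, Gc d h x u l - Gc d h' x' u' l + B - γ
      = ((Fintype.card (Fin d) : ℝ) * (A - B) l) • EuclideanSpace.single l (1 : ℝ) - (A - B)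
        + (A - γ) := fun l => by
    rw [Gc_eq_smul_single, Gc_eq_smul_single, Fintype.card_fin, PiLp.sub_apply, mul_sub, sub_smul]
    abel
  simp_rw [hsplit]
  rw [sum_norm_card_smul_single_sub_add_sq, Fintype.card_fin]

end Estimators

/-- variance bound for the variance-reduced estimator, Lemma 1 of the paper.
For `L`-smooth `h`, any `x, x̃, y` and `0 < u ≤ ũ`, with
`g(l) = G_h^{(c)}(x,u,l) − G_h^{(c)}(x̃,ũ,l) + G_h^{(2d)}(x̃,ũ)`:
`(1/d) Σ_l ‖g(l) − ∇h(x)‖² ≤ 12dL²‖x−y‖² + 12dL²‖x̃−y‖² + (7/2)ũ²L²d²`. -/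
theorem stmt4 (d : ℕ) (L : ℝ) (h : EuclideanSpace ℝ (Fin d) → ℝ)
    (hdiff : Differentiable ℝ h)
    (hsmooth : ∀ x y, ‖gradient h x - gradient h y‖ ≤ L * ‖x - y‖)
    (x xt y : EuclideanSpace ℝ (Fin d)) (u ut : ℝ) (hu : 0 < u) (huut : u ≤ ut) :
    (1 / (d : ℝ)) * ∑ l : Fin d,
        ‖Gc d h x u l - Gc d h xt ut l + G2d d h xt ut - gradient h x‖ ^ 2
      ≤ 12 * (d : ℝ) * L ^ 2 * ‖x - y‖ ^ 2 + 12 * (d : ℝ) * L ^ 2 * ‖xt - y‖ ^ 2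
        + (7 / 2) * ut ^ 2 * L ^ 2 * (d : ℝ) ^ 2 := by
  obtain rfl | hd := Nat.eq_zero_or_pos d
  · simp
  set A := G2d d h x u
  set B := G2d d h xt ut
  have hA : ‖A - gradient h x‖ ^ 2 ≤ d * L ^ 2 * ut ^ 2 / 4 :=
    (norm_G2d_sub_gradient_sq_le hdiff hsmooth x hu).trans (by gcongr)
  have hB : ‖gradient h xt - B‖ ^ 2 ≤ d * L ^ 2 * ut ^ 2 / 4 := by
    rw [norm_sub_rev]; exact norm_G2d_sub_gradient_sq_le hdiff hsmooth xt (hu.trans_le huut)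
  have hgrad : ‖gradient h x - gradient h xt‖ ^ 2 ≤ 2 * L ^ 2 * (‖x - y‖ ^ 2 + ‖xt - y‖ ^ 2) :=
    calc _ ≤ (L * ‖x - xt‖) ^ 2 := pow_le_pow_left₀ (norm_nonneg _) (hsmooth x xt) 2
      _ = L ^ 2 * ‖x - xt‖ ^ 2 := mul_pow _ _ _
      _ ≤ L ^ 2 * (2 * (‖x - y‖ ^ 2 + ‖xt - y‖ ^ 2)) := by
        gcongr; exact norm_sub_sq_le_two_mul x xt y
      _ = _ := by ring
  have hAB : ‖A - B‖ ^ 2 ≤ 3 * (‖A - gradient h x‖ ^ 2 + ‖gradient h x - gradient h xt‖ ^ 2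
      + ‖gradient h xt - B‖ ^ 2) := by
    simpa using norm_add_add_sq_le_three_mul (A - gradient h x) (gradient h x - gradient h xt)
      (gradient h xt - B)
  rw [sum_norm_Gc_sub_Gc_add_G2d_sub_sq, ← mul_assoc, one_div_mul_cancel (by positivity), one_mul]
  have hd0 : (0 : ℝ) ≤ d - 1 := sub_nonneg.2 (Nat.one_le_cast.2 hd)
  nlinarith [mul_le_mul_of_nonneg_left hAB hd0, mul_le_mul_of_nonneg_left hgrad hd0,
    mul_le_mul_of_nonneg_left hA hd0, mul_le_mul_of_nonneg_left hB hd0]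
end
end

section
/- Let d ≥ 3 be an integer, σ ∈ [0,1), and α, L > 0 with αL ≤ (1−σ²)³/(12·√29·d^{5/2}). Define the 3×3 real matrix A with rows [ (1+2σ²)/3, 0, 9·√29·√d·αL/(1−σ²) ], [ 17·√d·αL + (1+2σ²)/3, 1 − (1−σ²)/d, 9·√29·√d·αL/(1−σ²) ], [ 9·√29·√d·αL/(1−σ²), 3·√29·√d·αL/(1−σ²), (2+σ²)/3 ], and let π = ((1−σ²)/d, 3, 1). Then (A·π)_i ≤ (1 − (1−σ²)/(2d))·π_i for i = 1,2,3; consequently the matrix norm of A induced by the weighted norm ‖x‖_∞^π = max_i |x_i|/π_i is at most 1 − (1−σ²)/(2d), and every complex eigenvalue λ of A satisfies |λ| ≤ 1 − (1−σ²)/(2d) (i.e. the spectral radius ρ(A) ≤ 1 − (1−σ²)/(2d)). -/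
/-!
A nonnegative matrix `A` with `A π ≤ ρ π` for a positive vector `π` contracts the `π`-weighted
sup norm by `ρ`, since `|(A x)_i| ≤ ∑ⱼ A_ij |x_j| ≤ M (A π)_i` whenever `|x_j| ≤ M π_j`; applied
to an eigenvector, with `M` attained at a coordinate, the same estimate bounds the eigenvalue.
For the matrix at hand, the step-size condition `12 d² √29 √d αL ≤ (1 - σ²)³` makes every
coupling entry `O((1 - σ²)² / d²)`, small enough against the gaps `(1 - σ²)/d` on the diagonal
for `A π ≤ (1 - (1 - σ²)/(2d)) π` to hold row by row.
-/

open Finset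

namespace Matrix

variable {ι 𝕜 : Type*} [Fintype ι] [RCLike 𝕜] {A : Matrix ι ι ℝ} {p : ι → ℝ} {r : ℝ}

theorem norm_map_ofReal_mulVec_le (hA : ∀ i j, 0 ≤ A i j) (hAp : ∀ i, (A *ᵥ p) i ≤ r * p i)
    {x : ι → 𝕜} {M : ℝ} (hM : 0 ≤ M) (hx : ∀ j, ‖x j‖ ≤ M * p j) (i : ι) :
    ‖(A.map ((↑) : ℝ → 𝕜) *ᵥ x) i‖ ≤ r * (M * p i) :=
  calc ‖(A.map ((↑) : ℝ → 𝕜) *ᵥ x) i‖ = ‖∑ j, (A i j : 𝕜) * x j‖ := rfl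
    _ ≤ ∑ j, ‖(A i j : 𝕜) * x j‖ := norm_sum_le _ _
    _ = ∑ j, A i j * ‖x j‖ := by
      simp only [norm_mul, RCLike.norm_ofReal, abs_of_nonneg (hA _ _)]
    _ ≤ ∑ j, A i j * (M * p j) := sum_le_sum fun j _ => mul_le_mul_of_nonneg_left (hx j) (hA i j)
    _ = M * (A *ᵥ p) i := by
      simp only [mulVec, dotProduct, mul_sum]
      exact sum_congr rfl fun j _ => by ring
    _ ≤ M * (r * p i) := mul_le_mul_of_nonneg_left (hAp i) hM
    _ = r * (M * p i) := by ring

theorem iSup_abs_mulVec_div_le [Nonempty ι] (hA : ∀ i j, 0 ≤ A i j) (hp : ∀ i, 0 < p i)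
    (hAp : ∀ i, (A *ᵥ p) i ≤ r * p i) (x : ι → ℝ) :
    (⨆ i, |(A *ᵥ x) i| / p i) ≤ r * ⨆ i, |x i| / p i := by
  set M := ⨆ i, |x i| / p i
  have hbdd : BddAbove (Set.range fun i => |x i| / p i) := (Set.finite_range _).bddAbove
  have hx : ∀ j, ‖x j‖ ≤ M * p j := fun j => (div_le_iff₀ (hp j)).1 (le_ciSup hbdd j)
  have hM : 0 ≤ M := Real.iSup_nonneg fun i => div_nonneg (abs_nonneg _) (hp i).le
  refine ciSup_le fun i => (div_le_iff₀ (hp i)).2 ?_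
  simpa [mul_assoc] using norm_map_ofReal_mulVec_le (𝕜 := ℝ) hA hAp hM hx i

theorem norm_le_of_map_ofReal_mulVec_eq_smul (hA : ∀ i j, 0 ≤ A i j) (hp : ∀ i, 0 < p i)
    (hAp : ∀ i, (A *ᵥ p) i ≤ r * p i) {lam : 𝕜} {v : ι → 𝕜} (hv : v ≠ 0)
    (hlam : A.map ((↑) : ℝ → 𝕜) *ᵥ v = lam • v) : ‖lam‖ ≤ r := by
  obtain ⟨k, hk⟩ := Function.ne_iff.1 hv
  have : Nonempty ι := ⟨k⟩
  obtain ⟨i, hi⟩ := Finite.exists_max fun j => ‖v j‖ / p j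
  have hvi : 0 < ‖v i‖ := (div_pos_iff_of_pos_right (hp i)).1 <|
    (div_pos (norm_pos_iff.2 hk) (hp k)).trans_le (hi k)
  have hx : ∀ j, ‖v j‖ ≤ ‖v i‖ / p i * p j := fun j => (div_le_iff₀ (hp j)).1 (hi j)
  have key := norm_map_ofReal_mulVec_le hA hAp (div_nonneg (norm_nonneg _) (hp i).le) hx i
  rw [hlam, Pi.smul_apply, smul_eq_mul, norm_mul, div_mul_cancel₀ _ (hp i).ne'] at key
  exact le_of_mul_le_mul_right key hvi

end Matrix

-- `r`, `q`, `c` stand for `√29`, `√d` and `αL`.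
noncomputable def errorMatrix (σ D r q c : ℝ) : Matrix (Fin 3) (Fin 3) ℝ :=
  !![(1 + 2 * σ ^ 2) / 3, 0, 9 * r * q * c / (1 - σ ^ 2);
     17 * q * c + (1 + 2 * σ ^ 2) / 3, 1 - (1 - σ ^ 2) / D, 9 * r * q * c / (1 - σ ^ 2);
     9 * r * q * c / (1 - σ ^ 2), 3 * r * q * c / (1 - σ ^ 2), (2 + σ ^ 2) / 3]

noncomputable def errorWeight (σ D : ℝ) : Fin 3 → ℝ := ![(1 - σ ^ 2) / D, 3, 1]

section ErrorMatrix

open Matrix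

variable {s D a b : ℝ}

theorem mul_div_one_sub_le_sq_div {k r q c : ℝ} (hk : 0 ≤ k) (hs : s < 1) (hD : 0 < D)
    (hstep : 12 * D ^ 2 * (r * q * c) ≤ (1 - s) ^ 3) :
    k * r * q * c / (1 - s) ≤ k * (1 - s) ^ 2 / (12 * D ^ 2) := by
  rw [div_le_div_iff₀ (by linarith) (by positivity)]
  nlinarith [mul_le_mul_of_nonneg_left hstep hk]

theorem errorMatrix_row0 (hs : s < 1) (hD : 3 ≤ D) (ha : a ≤ 9 * (1 - s) ^ 2 / (12 * D ^ 2)) :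
    (1 + 2 * s) / 3 * ((1 - s) / D) + a ≤ (1 - (1 - s) / (2 * D)) * ((1 - s) / D) := by
  have hε : 0 < 1 - s := by linarith
  have hgap : 9 * (1 - s) ^ 2 / (12 * D ^ 2) ≤
      (1 - (1 - s) / (2 * D)) * ((1 - s) / D) - (1 + 2 * s) / 3 * ((1 - s) / D) := by
    rw [div_le_iff₀ (by positivity)]
    field_simp
    nlinarith [mul_nonneg (sq_nonneg (1 - s)) (by linarith : 0 ≤ D - 3)]
  linarith

theorem errorMatrix_row1 (hs : s < 1) (hD : 3 ≤ D) (ha : a ≤ 9 * (1 - s) ^ 2 / (12 * D ^ 2))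
    (hb : b ≤ 1 / 2) :
    (b + (1 + 2 * s) / 3) * ((1 - s) / D) + (1 - (1 - s) / D) * 3 + a ≤
      (1 - (1 - s) / (2 * D)) * 3 := by
  have hε : 0 < 1 - s := by linarith
  have hbε : b * ((1 - s) / D) ≤ 1 / 2 * ((1 - s) / D) :=
    mul_le_mul_of_nonneg_right hb (by positivity)
  have hgap : 9 * (1 - s) ^ 2 / (12 * D ^ 2) ≤ (1 - (1 - s) / (2 * D)) * 3 -
      (1 / 2 + (1 + 2 * s) / 3) * ((1 - s) / D) - (1 - (1 - s) / D) * 3 := by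
    rw [div_le_iff₀ (by positivity)]
    field_simp
    nlinarith [mul_nonneg (sq_nonneg (1 - s)) (by linarith : 0 ≤ D - 3)]
  linarith

theorem errorMatrix_row2 (hs0 : 0 ≤ s) (hs : s < 1) (hD : 3 ≤ D)
    (ha : a ≤ 9 * (1 - s) ^ 2 / (12 * D ^ 2)) (hb : b ≤ 3 * (1 - s) ^ 2 / (12 * D ^ 2)) :
    a * ((1 - s) / D) + b * 3 + (2 + s) / 3 ≤ 1 - (1 - s) / (2 * D) := by
  have hε : 0 < 1 - s := by linarith
  have haε : a * ((1 - s) / D) ≤ 9 * (1 - s) ^ 2 / (12 * D ^ 2) * ((1 - s) / D) :=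
    mul_le_mul_of_nonneg_right ha (by positivity)
  have hgap : 9 * (1 - s) ^ 2 / (12 * D ^ 2) * ((1 - s) / D) + 3 * (1 - s) ^ 2 / (12 * D ^ 2) * 3 ≤
      1 - (1 - s) / (2 * D) - (2 + s) / 3 := by
    have key : 9 * (1 - s) * ((1 - s) + D) ≤ 2 * D ^ 2 * (2 * D - 3) := by nlinarith
    rw [← sub_nonneg]
    field_simp
    nlinarith [mul_le_mul_of_nonneg_left key hε.le]
  linarith

variable {σ r q c : ℝ}

theorem errorWeight_pos (hσ : σ ^ 2 < 1) (hD : 0 < D) (i : Fin 3) : 0 < errorWeight σ D i := by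
  have hε : 0 < 1 - σ ^ 2 := by linarith
  fin_cases i <;> simp [errorWeight, div_pos hε hD]

theorem errorMatrix_nonneg (hσ : σ ^ 2 < 1) (hD : 1 ≤ D) (hr : 0 ≤ r) (hq : 0 ≤ q) (hc : 0 ≤ c)
    (i j : Fin 3) : 0 ≤ errorMatrix σ D r q c i j := by
  have hε : 0 < 1 - σ ^ 2 := by linarith
  have hεD : (1 - σ ^ 2) / D ≤ 1 := (div_le_one (by linarith)).2 (by nlinarith [sq_nonneg σ])
  fin_cases i <;> fin_cases j <;> simp [errorMatrix] <;> first | positivity | linarith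

theorem errorMatrix_mulVec_errorWeight_le (hσ : σ ^ 2 < 1) (hD : 3 ≤ D) (hr : 5 ≤ r)
    (hq : 0 ≤ q) (hc : 0 ≤ c) (hstep : 12 * D ^ 2 * (r * q * c) ≤ (1 - σ ^ 2) ^ 3) (i : Fin 3) :
    (errorMatrix σ D r q c *ᵥ errorWeight σ D) i ≤
      (1 - (1 - σ ^ 2) / (2 * D)) * errorWeight σ D i := by
  have hD0 : 0 < D := by linarith
  have h9 := mul_div_one_sub_le_sq_div (k := 9) (by norm_num) hσ hD0 hstep
  have h3 := mul_div_one_sub_le_sq_div (k := 3) (by norm_num) hσ hD0 hstep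
  have h17 : 17 * q * c ≤ 1 / 2 := by
    have hε3 : (1 - σ ^ 2) ^ 3 ≤ 1 := pow_le_one₀ (by linarith) (by nlinarith [sq_nonneg σ])
    nlinarith [mul_nonneg hq hc, mul_le_mul_of_nonneg_right hr (mul_nonneg hq hc)]
  fin_cases i <;>
    simp only [mulVec, dotProduct, Fin.sum_univ_three, errorMatrix, errorWeight, of_apply,
      cons_val', cons_val_fin_one, cons_val_zero, cons_val_one, Matrix.cons_val, Fin.isValue,
      Fin.zero_eta, Fin.mk_one, Fin.reduceFinMk, zero_mul, add_zero, mul_one]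
  · exact errorMatrix_row0 hσ hD h9
  · exact errorMatrix_row1 hσ hD h9 h17
  · exact errorMatrix_row2 (sq_nonneg σ) hσ hD h9 h3

end ErrorMatrix

/-- Lemma 4 of the paper. For `d ≥ 3`, `σ ∈ [0,1)`, `α, L > 0` with
`αL ≤ (1−σ²)³/(12·√29·d^{5/2})`, the matrix `A` satisfies `(Aπ)_i ≤ (1 − (1−σ²)/(2d)) π_i`
for `π = ((1−σ²)/d, 3, 1)`; consequently the induced weighted-∞ matrix norm of `A` is at most
`1 − (1−σ²)/(2d)`, and every complex eigenvalue of `A` has modulus at most `1 − (1−σ²)/(2d)`. -/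
theorem stmt7 (d : ℕ) (hd : 3 ≤ d) (σ α L : ℝ) (hσ0 : 0 ≤ σ) (hσ1 : σ < 1)
    (hα : 0 < α) (hL : 0 < L)
    (hstep : α * L ≤ (1 - σ ^ 2) ^ 3 / (12 * Real.sqrt 29 * (d : ℝ) ^ ((5 : ℝ) / 2))) :
    let A : Matrix (Fin 3) (Fin 3) ℝ :=
      !![(1 + 2 * σ ^ 2) / 3, 0, 9 * Real.sqrt 29 * Real.sqrt d * (α * L) / (1 - σ ^ 2);
         17 * Real.sqrt d * (α * L) + (1 + 2 * σ ^ 2) / 3, 1 - (1 - σ ^ 2) / d,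
           9 * Real.sqrt 29 * Real.sqrt d * (α * L) / (1 - σ ^ 2);
         9 * Real.sqrt 29 * Real.sqrt d * (α * L) / (1 - σ ^ 2),
           3 * Real.sqrt 29 * Real.sqrt d * (α * L) / (1 - σ ^ 2), (2 + σ ^ 2) / 3]
    let π : Fin 3 → ℝ := ![(1 - σ ^ 2) / d, 3, 1]
    (∀ i, A.mulVec π i ≤ (1 - (1 - σ ^ 2) / (2 * d)) * π i) ∧
    (∀ x : Fin 3 → ℝ,
      (⨆ i, |A.mulVec x i| / π i) ≤ (1 - (1 - σ ^ 2) / (2 * d)) * ⨆ i, |x i| / π i) ∧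
    (∀ (lam : ℂ) (v : Fin 3 → ℂ), v ≠ 0 →
      (A.map (fun a : ℝ => (a : ℂ))).mulVec v = lam • v →
        ‖lam‖ ≤ 1 - (1 - σ ^ 2) / (2 * d)) := by
  intro A π
  have hσ : σ ^ 2 < 1 := pow_lt_one₀ hσ0 hσ1 two_ne_zero
  have hD : (3 : ℝ) ≤ d := by exact_mod_cast hd
  have h29 : (5 : ℝ) ≤ √29 := Real.le_sqrt_of_sq_le (by norm_num)
  have hc : 0 ≤ α * L := (mul_pos hα hL).le
  have hstep' : 12 * (d : ℝ) ^ 2 * (√29 * √d * (α * L)) ≤ (1 - σ ^ 2) ^ 3 := by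
    have hpow : (d : ℝ) ^ ((5 : ℝ) / 2) = d ^ 2 * √d := by
      rw [show (5 : ℝ) / 2 = 2 + 1 / 2 by norm_num, Real.rpow_add (by positivity),
        Real.sqrt_eq_rpow]
      norm_num
    rw [hpow, le_div_iff₀ (by positivity)] at hstep
    linarith
  have hAπ : ∀ i, A.mulVec π i ≤ (1 - (1 - σ ^ 2) / (2 * d)) * π i :=
    errorMatrix_mulVec_errorWeight_le hσ hD h29 (Real.sqrt_nonneg _) hc hstep'
  have hA : ∀ i j, 0 ≤ A i j := errorMatrix_nonneg hσ (by linarith) (by linarith) (Real.sqrt_nonneg _) hc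
  have hπ : ∀ i, 0 < π i := errorWeight_pos hσ (by linarith)
  exact ⟨hAπ, Matrix.iSup_abs_mulVec_div_le hA hπ hAπ,
    fun _ _ hv hlam => Matrix.norm_le_of_map_ofReal_mulVec_eq_smul hA hπ hAπ hv hlam⟩
end

section
/- Let W ∈ ℝ^{N×N} and set σ = ‖W − (1/N)·1_N·1_Nᵀ‖₂ (spectral norm), and assume 0 < σ < 1. For any x_1,…,x_N, s_1,…,s_N ∈ ℝ^d with stacked vectors x, s ∈ ℝ^{Nd}, means x̄ = (1/N)·Σ_i x_i, s̄ = (1/N)·Σ_i s_i, and any α > 0: ‖(W ⊗ I_d)·(x − 1_N ⊗ x̄ − α·(s − 1_N ⊗ s̄))‖² ≤ ((1+2σ²)/3)·‖x − 1_N ⊗ x̄‖² + (σ²(1+2σ²)/(1−σ²))·α²·‖s − 1_N ⊗ s̄‖². -/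
/-!
Centred vectors sum to zero, and on families summing to zero `W ⊗ I_d` acts as
`(W - 𝟙𝟙ᵀ/N) ⊗ I_d`, whose spectral norm is `σ` (the factor `I_d` is handled column by column).
With `a = ‖x - 𝟙 ⊗ x̄‖` and `b = ‖s - 𝟙 ⊗ s̄‖` the triangle inequality gives the bound
`σ (a + |α| b)`, and `σ² (a + t)² ≤ (1 + 2σ²)/3 · a² + σ²(1 + 2σ²)/(1 - σ²) · t²` is a weighted
Young inequality whose slack is the square `((1 - σ²) a - 3σ² t)² / (3 (1 - σ²))`.
-/

open Finset WithLp Matrix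

variable {ι κ E : Type*} [Fintype ι] [AddCommGroup E] [Module ℝ E]

theorem sum_sub_mean_eq_zero (x : ι → E) :
    ∑ i, (x i - (Fintype.card ι : ℝ)⁻¹ • ∑ m, x m) = 0 := by
  rcases isEmpty_or_nonempty ι with hι | hι
  · simp
  rw [sum_sub_distrib, sum_const, card_univ, ← Nat.cast_smul_eq_nsmul ℝ, smul_smul,
    mul_inv_cancel₀ (by positivity), one_smul, sub_self]

theorem sum_smul_eq_sum_sub_const_smul_of_sum_eq_zero (A : Matrix ι ι ℝ) (c : ℝ) {u : ι → E}
    (hu : ∑ j, u j = 0) (i : ι) :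
    ∑ j, A i j • u j = ∑ j, (A - of fun _ _ => c : Matrix ι ι ℝ) i j • u j := by
  simp [sub_smul, sum_sub_distrib, ← smul_sum, hu]

theorem norm_sq_toLp_pi_eq_sum_columns [Fintype κ] (u : ι → EuclideanSpace ℝ κ) :
    ‖toLp 2 u‖ ^ 2 = ∑ k, ‖toLp 2 fun i => u i k‖ ^ 2 := by
  simp only [PiLp.norm_sq_eq_of_L2]
  exact sum_comm

theorem sum_smul_apply_eq_mulVec (A : Matrix ι ι ℝ) (u : ι → EuclideanSpace ℝ κ) (i : ι)
    (k : κ) : (∑ j, A i j • u j) k = (A *ᵥ fun j => u j k) i := by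
  simp [mulVec, dotProduct, ofLp_sum, Finset.sum_apply]

theorem norm_toLp_sum_smul_le_opNorm_mul [Fintype κ] [DecidableEq ι] (A : Matrix ι ι ℝ)
    (u : ι → EuclideanSpace ℝ κ) :
    ‖toLp 2 fun i => ∑ j, A i j • u j‖ ≤ ‖toEuclideanCLM (𝕜 := ℝ) A‖ * ‖toLp 2 u‖ := by
  set T := toEuclideanCLM (𝕜 := ℝ) A
  have hcolumn : ∀ k, ‖toLp 2 fun i => (∑ j, A i j • u j) k‖ ^ 2
      ≤ ‖T‖ ^ 2 * ‖toLp 2 fun i => u i k‖ ^ 2 := fun k => by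
    simp only [sum_smul_apply_eq_mulVec, ← mul_pow]
    exact pow_le_pow_left₀ (norm_nonneg _) (T.le_opNorm (toLp 2 fun i => u i k)) 2
  refine (pow_le_pow_iff_left₀ (norm_nonneg _) (by positivity) two_ne_zero).mp ?_
  rw [mul_pow, norm_sq_toLp_pi_eq_sum_columns, norm_sq_toLp_pi_eq_sum_columns, mul_sum]
  exact sum_le_sum fun k _ => hcolumn k

theorem mul_add_sq_le {s : ℝ} (hs : s < 1) (a t : ℝ) :
    s * (a + t) ^ 2 ≤ (1 + 2 * s) / 3 * a ^ 2 + s * (1 + 2 * s) / (1 - s) * t ^ 2 := by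
  have h1s : 0 < 1 - s := sub_pos.mpr hs
  have hslack : (1 + 2 * s) / 3 * a ^ 2 + s * (1 + 2 * s) / (1 - s) * t ^ 2 - s * (a + t) ^ 2
      = ((1 - s) * a - 3 * s * t) ^ 2 / (3 * (1 - s)) := by
    field_simp
    ring
  have : 0 ≤ ((1 - s) * a - 3 * s * t) ^ 2 / (3 * (1 - s)) := by positivity
  linarith

theorem stmt16_general (N d : ℕ) (W : Matrix (Fin N) (Fin N) ℝ) (σ : ℝ)
    (hσ : σ = ‖Matrix.toEuclideanCLM (𝕜 := ℝ) (n := Fin N) (W - Matrix.of fun _ _ => (N : ℝ)⁻¹)‖)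
    (hσ1 : σ < 1)
    (x s : Fin N → EuclideanSpace ℝ (Fin d)) (α : ℝ) :
    ‖(WithLp.equiv 2 ((i : Fin N) → EuclideanSpace ℝ (Fin d))).symm
        (fun i => ∑ j, W i j •
          (x j - (N : ℝ)⁻¹ • ∑ m, x m - α • (s j - (N : ℝ)⁻¹ • ∑ m, s m)))‖ ^ 2
      ≤ ((1 + 2 * σ ^ 2) / 3) *
          ‖(WithLp.equiv 2 ((i : Fin N) → EuclideanSpace ℝ (Fin d))).symm
            (fun i => x i - (N : ℝ)⁻¹ • ∑ m, x m)‖ ^ 2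
        + (σ ^ 2 * (1 + 2 * σ ^ 2) / (1 - σ ^ 2)) * α ^ 2 *
          ‖(WithLp.equiv 2 ((i : Fin N) → EuclideanSpace ℝ (Fin d))).symm
            (fun i => s i - (N : ℝ)⁻¹ • ∑ m, s m)‖ ^ 2 := by
  simp only [WithLp.equiv_symm_apply]
  set x₀ : Fin N → EuclideanSpace ℝ (Fin d) := fun i => x i - (N : ℝ)⁻¹ • ∑ m, x m
  set s₀ : Fin N → EuclideanSpace ℝ (Fin d) := fun i => s i - (N : ℝ)⁻¹ • ∑ m, s m
  have hσ0 : 0 ≤ σ := hσ ▸ norm_nonneg _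
  have hsum : ∑ j, (x₀ j - α • s₀ j) = 0 := by
    have hx := sum_sub_mean_eq_zero x
    have hs := sum_sub_mean_eq_zero s
    simp only [Fintype.card_fin] at hx hs
    rw [sum_sub_distrib, ← smul_sum, hx, hs, smul_zero, sub_zero]
  have hbound : ‖toLp 2 fun i => ∑ j, W i j • (x₀ j - α • s₀ j)‖
      ≤ σ * (‖toLp 2 x₀‖ + |α| * ‖toLp 2 s₀‖) := calc
    _ = ‖toLp 2 fun i =>
          ∑ j, (W - of fun _ _ => (N : ℝ)⁻¹ : Matrix _ _ ℝ) i j • (x₀ j - α • s₀ j)‖ := by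
      rw [funext (sum_smul_eq_sum_sub_const_smul_of_sum_eq_zero W (N : ℝ)⁻¹ hsum)]
    _ ≤ σ * ‖toLp 2 x₀ - α • toLp 2 s₀‖ := hσ ▸ norm_toLp_sum_smul_le_opNorm_mul _ _
    _ ≤ σ * (‖toLp 2 x₀‖ + |α| * ‖toLp 2 s₀‖) := by
      gcongr
      exact (norm_sub_le _ _).trans_eq (by rw [norm_smul, Real.norm_eq_abs])
  calc _ ≤ σ ^ 2 * (‖toLp 2 x₀‖ + |α| * ‖toLp 2 s₀‖) ^ 2 := by
        rw [← mul_pow]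
        exact pow_le_pow_left₀ (norm_nonneg _) hbound 2
    _ ≤ _ := by
      have hσsq : σ ^ 2 < 1 := by nlinarith
      have := mul_add_sq_le hσsq ‖toLp 2 x₀‖ (|α| * ‖toLp 2 s₀‖)
      rwa [mul_pow, sq_abs, ← mul_assoc] at this

/-- Let `σ = ‖W − (1/N)·1·1ᵀ‖₂` (spectral norm) with `0 < σ < 1`. For stacked
vectors `x, s ∈ ℝ^{Nd}` with means `x̄, s̄` and any `α > 0`,
`‖(W ⊗ I_d)(x − 1⊗x̄ − α(s − 1⊗s̄))‖² ≤ ((1+2σ²)/3)‖x − 1⊗x̄‖² + (σ²(1+2σ²)/(1−σ²))α²‖s − 1⊗s̄‖²`,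
where `(W ⊗ I_d)` acts blockwise and the stacked space carries the Euclidean (ℓ²) norm. -/
theorem stmt16 (N d : ℕ) (W : Matrix (Fin N) (Fin N) ℝ) (σ : ℝ)
    (hσ : σ = ‖Matrix.toEuclideanCLM (𝕜 := ℝ) (n := Fin N) (W - Matrix.of fun _ _ => (N : ℝ)⁻¹)‖)
    (hσ0 : 0 < σ) (hσ1 : σ < 1)
    (x s : Fin N → EuclideanSpace ℝ (Fin d)) (α : ℝ) (hα : 0 < α) :
    ‖(WithLp.equiv 2 ((i : Fin N) → EuclideanSpace ℝ (Fin d))).symm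
        (fun i => ∑ j, W i j •
          (x j - (N : ℝ)⁻¹ • ∑ m, x m - α • (s j - (N : ℝ)⁻¹ • ∑ m, s m)))‖ ^ 2
      ≤ ((1 + 2 * σ ^ 2) / 3) *
          ‖(WithLp.equiv 2 ((i : Fin N) → EuclideanSpace ℝ (Fin d))).symm
            (fun i => x i - (N : ℝ)⁻¹ • ∑ m, x m)‖ ^ 2
        + (σ ^ 2 * (1 + 2 * σ ^ 2) / (1 - σ ^ 2)) * α ^ 2 *
          ‖(WithLp.equiv 2 ((i : Fin N) → EuclideanSpace ℝ (Fin d))).symm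
            (fun i => s i - (N : ℝ)⁻¹ • ∑ m, s m)‖ ^ 2 :=
  stmt16_general N d W σ hσ hσ1 x s α
end

section
/- Let d ≥ 3 be an integer, σ ∈ [0,1), and α, L > 0 with αL ≤ (1−σ²)³/(45·√29·d^{3/2}). Define the 3×3 real matrix A′ with rows [ (1+2σ²)/3, 0, 9·√29·√d·αL/(1−σ²) ], [ 17·√d·αL + (1+2σ²)/(3d), 1 − (1−σ²)/d, 9·√29·αL/((1−σ²)·√d) ], [ 9·√29·√d·αL/(1−σ²), 3·√29·√d·αL/(1−σ²), (2+σ²)/3 ], and let π′ = (1−σ², 3, 1). Then (A′·π′)_i ≤ (1 − (1−σ²)/(2d))·π′_i for i = 1,2,3; consequently the matrix norm of A′ induced by the weighted norm ‖x‖_∞^{π′} = max_i |x_i|/π′_i is at most 1 − (1−σ²)/(2d), and every complex eigenvalue λ of A′ satisfies |λ| ≤ 1 − (1−σ²)/(2d) (i.e. the spectral radius ρ(A′) ≤ 1 − (1−σ²)/(2d)). -/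
/-!
`A′` is entrywise nonnegative and `π′` is a positive vector with `A′π′ ≤ c π′` componentwise,
where `c = 1 − (1−σ²)/(2d)`. For a nonnegative matrix such a subinvariant vector bounds
everything: `|(A′x)_i| ≤ (A′|x|)_i ≤ ‖x‖^π′ (A′π′)_i ≤ c ‖x‖^π′ π′_i`, and for an eigenvector `v`
the same estimate at a coordinate maximising `|v_i|/π′_i` gives `|λ| ≤ c`. The three row
inequalities become polynomial after clearing denominators; with `s = 1−σ²`, `r = √d` and
`t = αL` they follow from `45 √29 r³ t ≤ s³`, `r² ≥ 3` and `√29 ≥ 5`.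
-/

open Matrix

section WeightedNorm

variable {n : Type*} [Fintype n] {A : Matrix n n ℝ} {p : n → ℝ} {c : ℝ}

lemma mulVec_le_of_le_mul_weight (hA : ∀ i j, 0 ≤ A i j) (hAp : ∀ i, (A *ᵥ p) i ≤ c * p i)
    {y : n → ℝ} {M : ℝ} (hM : 0 ≤ M) (hy : ∀ j, y j ≤ M * p j) (i : n) :
    (A *ᵥ y) i ≤ c * M * p i :=
  calc (A *ᵥ y) i ≤ (A *ᵥ (M • p)) i :=
        Finset.sum_le_sum fun j _ => mul_le_mul_of_nonneg_left (hy j) (hA i j)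
    _ = M * (A *ᵥ p) i := by rw [mulVec_smul, Pi.smul_apply, smul_eq_mul]
    _ ≤ M * (c * p i) := mul_le_mul_of_nonneg_left (hAp i) hM
    _ = c * M * p i := by ring

lemma norm_map_mulVec_le {𝕜 : Type*} [NormedField 𝕜] [NormedAlgebra ℝ 𝕜]
    (hA : ∀ i j, 0 ≤ A i j) (v : n → 𝕜) (i : n) :
    ‖(A.map (algebraMap ℝ 𝕜) *ᵥ v) i‖ ≤ (A *ᵥ fun j => ‖v j‖) i := by
  refine (norm_sum_le _ _).trans_eq (Finset.sum_congr rfl fun j _ => ?_)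
  change ‖algebraMap ℝ 𝕜 (A i j) * v j‖ = A i j * ‖v j‖
  rw [norm_mul, norm_algebraMap', Real.norm_of_nonneg (hA i j)]

theorem weightedSup_mulVec_le (hp : ∀ i, 0 < p i) (hA : ∀ i j, 0 ≤ A i j) (hc : 0 ≤ c)
    (hAp : ∀ i, (A *ᵥ p) i ≤ c * p i) (x : n → ℝ) :
    ⨆ i, |(A *ᵥ x) i| / p i ≤ c * ⨆ i, |x i| / p i := by
  set M := ⨆ i, |x i| / p i
  have hM : 0 ≤ M := Real.iSup_nonneg fun i => div_nonneg (abs_nonneg _) (hp i).le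
  have hx : ∀ j, |x j| ≤ M * p j := fun j =>
    (div_le_iff₀ (hp j)).1 (le_ciSup (f := fun i => |x i| / p i) (Set.finite_range _).bddAbove j)
  refine Real.iSup_le (fun i => (div_le_iff₀ (hp i)).2 ?_) (mul_nonneg hc hM)
  have := norm_map_mulVec_le (𝕜 := ℝ) hA x i
  simp only [Algebra.algebraMap_self, Real.norm_eq_abs] at this
  exact this.trans (mulVec_le_of_le_mul_weight hA hAp hM hx i)

theorem norm_le_of_map_mulVec_eq_smul {𝕜 : Type*} [NormedField 𝕜] [NormedAlgebra ℝ 𝕜]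
    (hp : ∀ i, 0 < p i) (hA : ∀ i j, 0 ≤ A i j) (hAp : ∀ i, (A *ᵥ p) i ≤ c * p i)
    {lam : 𝕜} {v : n → 𝕜} (hv : v ≠ 0) (hAv : A.map (algebraMap ℝ 𝕜) *ᵥ v = lam • v) :
    ‖lam‖ ≤ c := by
  obtain ⟨j, hj⟩ := Function.ne_iff.mp hv
  obtain ⟨i, -, hi⟩ := Finset.exists_max_image Finset.univ (fun j => ‖v j‖ / p j)
    ⟨j, Finset.mem_univ j⟩
  have hvi : 0 < ‖v i‖ := (div_pos_iff_of_pos_right (hp i)).1 <|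
    (div_pos (norm_pos_iff.2 hj) (hp j)).trans_le (hi j (Finset.mem_univ j))
  have hv_le : ∀ j, ‖v j‖ ≤ ‖v i‖ / p i * p j := fun j =>
    (div_le_iff₀ (hp j)).1 (hi j (Finset.mem_univ j))
  refine le_of_mul_le_mul_right ?_ hvi
  calc ‖lam‖ * ‖v i‖ = ‖(A.map (algebraMap ℝ 𝕜) *ᵥ v) i‖ := by
        rw [hAv, Pi.smul_apply, smul_eq_mul, norm_mul]
    _ ≤ c * (‖v i‖ / p i) * p i := (norm_map_mulVec_le hA v i).trans <|
        mulVec_le_of_le_mul_weight hA hAp (div_nonneg (norm_nonneg _) (hp i).le) hv_le i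
    _ = c * ‖v i‖ := by field_simp [(hp i).ne']

end WeightedNorm

-- The paper's `A′` and `π′`, with `q = σ²` and `t = αL`.
noncomputable def contractionMatrix (q d t : ℝ) : Matrix (Fin 3) (Fin 3) ℝ :=
  !![(1 + 2 * q) / 3, 0, 9 * √29 * √d * t / (1 - q);
     17 * √d * t + (1 + 2 * q) / (3 * d), 1 - (1 - q) / d, 9 * √29 * t / ((1 - q) * √d);
     9 * √29 * √d * t / (1 - q), 3 * √29 * √d * t / (1 - q), (2 + q) / 3]

def contractionWeight (q : ℝ) : Fin 3 → ℝ := ![1 - q, 3, 1]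

section Contraction

variable {q d t : ℝ}

lemma contractionWeight_pos (hq : q < 1) (i : Fin 3) : 0 < contractionWeight q i := by
  fin_cases i <;> simp [contractionWeight, hq]

lemma contractionMatrix_nonneg (hq0 : 0 ≤ q) (hq1 : q < 1) (hd : 1 ≤ d) (ht : 0 ≤ t)
    (i j : Fin 3) : 0 ≤ contractionMatrix q d t i j := by
  fin_cases i <;> fin_cases j <;>
    simp only [contractionMatrix, of_apply, cons_val', cons_val_zero, cons_val_one, cons_val,
      cons_val_fin_one, Fin.isValue, Fin.zero_eta, Fin.mk_one, Fin.reduceFinMk, sub_nonneg, le_refl]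
  all_goals first
    | positivity
    | exact div_le_one_of_le₀ (by linarith) (by linarith)

lemma contractionMatrix_mulVec_weight_le (hq0 : 0 ≤ q) (hq1 : q < 1) (hd : 3 ≤ d) (ht : 0 ≤ t)
    (hstep : t ≤ (1 - q) ^ 3 / (45 * √29 * d ^ ((3 : ℝ) / 2))) (i : Fin 3) :
    (contractionMatrix q d t *ᵥ contractionWeight q) i
      ≤ (1 - (1 - q) / (2 * d)) * contractionWeight q i := by
  have hstep' : 45 * √29 * √d ^ 3 * t ≤ (1 - q) ^ 3 := by
    rw [Real.rpow_div_two_eq_sqrt _ (by linarith), le_div_iff₀ (by positivity)] at hstep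
    norm_cast at hstep
    linarith
  obtain ⟨r, hr0, rfl⟩ : ∃ r, 0 < r ∧ d = r ^ 2 :=
    ⟨√d, by positivity, (Real.sq_sqrt (by linarith)).symm⟩
  obtain ⟨s, hs0, hs1, rfl⟩ : ∃ s, 0 < s ∧ s ≤ 1 ∧ q = 1 - s :=
    ⟨1 - q, by linarith, by linarith, by ring⟩
  have hw : 5 ≤ √29 := by
    rw [show (5 : ℝ) = √(5 ^ 2) by simp]; exact Real.sqrt_le_sqrt (by norm_num)
  rw [Real.sqrt_sq hr0.le, sub_sub_cancel] at hstep'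
  have hs3 : s ^ 3 ≤ s ^ 2 := pow_le_pow_of_le_one hs0.le hs1 (by norm_num)
  have hu : 0 ≤ √29 * r ^ 3 * t := by positivity
  fin_cases i <;>
    simp only [contractionMatrix, contractionWeight, mulVec, dotProduct, Fin.sum_univ_three, of_apply,
      cons_val', cons_val_fin_one, cons_val_zero, cons_val_one, cons_val, Fin.isValue, Fin.zero_eta,
      Fin.mk_one, Fin.reduceFinMk, zero_mul, add_zero, mul_one, Real.sqrt_sq hr0.le,
      sub_sub_cancel] <;>
    field_simp
  · nlinarith [mul_le_mul_of_nonneg_left hd (by positivity : (0:ℝ) ≤ s ^ 3)]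
  · nlinarith [mul_le_mul_of_nonneg_left hd (by positivity : (0:ℝ) ≤ √29 * r * t),
      mul_le_mul_of_nonneg_left hw (by positivity : (0:ℝ) ≤ r ^ 3 * t * s ^ 2)]
  · nlinarith [mul_le_mul_of_nonneg_left hd (by positivity : (0:ℝ) ≤ s ^ 2),
      mul_le_mul_of_nonneg_left hs1 hu]

end Contraction

/-- the `p = 1/d` analogue of Lemma 4, from Appendix F. For `d ≥ 3`,
`σ ∈ [0,1)`, `α, L > 0` with `αL ≤ (1−σ²)³/(45·√29·d^{3/2})`, the matrix `A′` satisfies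
`(A′π′)_i ≤ (1 − (1−σ²)/(2d)) π′_i` for `π′ = (1−σ², 3, 1)`; consequently the induced
weighted-∞ matrix norm of `A′` is at most `1 − (1−σ²)/(2d)`, and every complex eigenvalue of
`A′` has modulus at most `1 − (1−σ²)/(2d)`. -/
theorem stmt18 (d : ℕ) (hd : 3 ≤ d) (σ α L : ℝ) (hσ0 : 0 ≤ σ) (hσ1 : σ < 1)
    (hα : 0 < α) (hL : 0 < L)
    (hstep : α * L ≤ (1 - σ ^ 2) ^ 3 / (45 * Real.sqrt 29 * (d : ℝ) ^ ((3 : ℝ) / 2))) :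
    let A' : Matrix (Fin 3) (Fin 3) ℝ :=
      !![(1 + 2 * σ ^ 2) / 3, 0, 9 * Real.sqrt 29 * Real.sqrt d * (α * L) / (1 - σ ^ 2);
         17 * Real.sqrt d * (α * L) + (1 + 2 * σ ^ 2) / (3 * d), 1 - (1 - σ ^ 2) / d,
           9 * Real.sqrt 29 * (α * L) / ((1 - σ ^ 2) * Real.sqrt d);
         9 * Real.sqrt 29 * Real.sqrt d * (α * L) / (1 - σ ^ 2),
           3 * Real.sqrt 29 * Real.sqrt d * (α * L) / (1 - σ ^ 2), (2 + σ ^ 2) / 3]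
    let π' : Fin 3 → ℝ := ![1 - σ ^ 2, 3, 1]
    (∀ i, A'.mulVec π' i ≤ (1 - (1 - σ ^ 2) / (2 * d)) * π' i) ∧
    (∀ x : Fin 3 → ℝ,
      (⨆ i, |A'.mulVec x i| / π' i) ≤ (1 - (1 - σ ^ 2) / (2 * d)) * ⨆ i, |x i| / π' i) ∧
    (∀ (lam : ℂ) (v : Fin 3 → ℂ), v ≠ 0 →
      (A'.map (fun a : ℝ => (a : ℂ))).mulVec v = lam • v →
        ‖lam‖ ≤ 1 - (1 - σ ^ 2) / (2 * d)) := by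
  intro A' π'
  have hd3 : (3 : ℝ) ≤ d := by exact_mod_cast hd
  have hq1 : σ ^ 2 < 1 := pow_lt_one₀ hσ0 hσ1 two_ne_zero
  have ht : 0 ≤ α * L := (mul_pos hα hL).le
  have hp : ∀ i, 0 < π' i := contractionWeight_pos hq1
  have hA : ∀ i j, 0 ≤ A' i j := contractionMatrix_nonneg (sq_nonneg σ) hq1 (by linarith) ht
  have hAp : ∀ i, (A' *ᵥ π') i ≤ (1 - (1 - σ ^ 2) / (2 * d)) * π' i :=
    contractionMatrix_mulVec_weight_le (sq_nonneg σ) hq1 hd3 ht hstep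
  have hc : 0 ≤ 1 - (1 - σ ^ 2) / (2 * d) :=
    sub_nonneg.2 ((div_le_one (by positivity)).2 (by nlinarith))
  exact ⟨hAp, weightedSup_mulVec_le hp hA hc hAp,
    fun _ _ hv hAv => norm_le_of_map_mulVec_eq_smul hp hA hAp hv hAv⟩
end
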